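/- There exist a constant C > 0 and an integer N such that for all n ≥ N, | Σ_{ℓ ∈ ℤ, |ℓ| < n/2, ℓ ≡ n (mod 2)} p_2(ℓ / n^{3/4}) − (n^{3/4}/2) ∫_{−∞}^{∞} p_2(t) dt | ≤ C n^{1/12}. -/

import Mathlib

/-!
Attach to each sample point `t` the cell `[t, t + h]`, `h = 2 / n ^ (3/4)`. On a cell, `p2`
differs from its value at the left end by at most `∫ |p2'|` over the cell, so the Riemann sum
differs from `h⁻¹ ∫ p2` over the union of the cells by at most `∫ |p2'|`, uniformly in `n`.
The cells cover `[-q, q]` with `q = n ^ (1/4) / 4`, and Chebyshev's bound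
`∫_{|t| ≥ q} |p2| ≤ q⁻³ ∫ |t ^ 3 p2 t|` keeps the missing part of the integral `O(1)` after
multiplication by `h⁻¹ = 32 q³`. The error is therefore bounded, which is stronger than
`O(n ^ (1/12))`.
-/

open MeasureTheory

noncomputable def p2 (t : ℝ) : ℝ := (t ^ 2 / 2 - t ^ 6 / 30) * Real.exp (-t ^ 4 / 12)

theorem integrable_pow_mul_exp_neg_pow_four_div (k : ℕ) {c : ℝ} (hc : 0 < c) :
    Integrable fun t : ℝ => t ^ k * Real.exp (-t ^ 4 / c) := by
  have hgauss : Integrable fun t : ℝ => t ^ k * Real.exp (-1 * t ^ 2) := by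
    simpa only [Real.rpow_natCast] using
      integrable_rpow_mul_exp_neg_mul_sq one_pos (s := k) (by linarith [k.cast_nonneg (α := ℝ)])
  refine (hgauss.norm.const_mul (Real.exp (c / 4))).mono' (by fun_prop)
    (ae_of_all _ fun t => ?_)
  have hquartic : -t ^ 4 / c ≤ c / 4 + -1 * t ^ 2 := by
    rw [div_le_iff₀ hc]; nlinarith [sq_nonneg (t ^ 2 - c / 2)]
  simp only [norm_mul, Real.norm_eq_abs, Real.abs_exp]
  rw [mul_left_comm, ← Real.exp_add]
  gcongr

section RiemannSum

variable {f f' : ℝ → ℝ}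

theorem abs_sub_intervalIntegral_div_le (hf : ∀ t, HasDerivAt f (f' t) t) (hf' : Integrable f')
    (x : ℝ) {h : ℝ} (hh : 0 < h) :
    |f x - (∫ t in x..x + h, f t) / h| ≤ ∫ t in x..x + h, |f' t| := by
  have hcont : Continuous f := continuous_iff_continuousAt.2 fun t => (hf t).continuousAt
  have hosc : ∀ t ∈ Set.uIoc x (x + h), ‖f x - f t‖ ≤ ∫ s in x..x + h, |f' s| := by
    intro t ht
    rw [Set.uIoc_of_le (by linarith)] at ht
    rw [Real.norm_eq_abs, abs_sub_comm,
      ← intervalIntegral.integral_eq_sub_of_hasDerivAt (fun s _ => hf s) hf'.intervalIntegrable]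
    exact (intervalIntegral.abs_integral_le_integral_abs ht.1.le).trans
      (intervalIntegral.integral_mono_interval le_rfl ht.1.le ht.2
        (ae_of_all _ fun s => abs_nonneg _) hf'.abs.intervalIntegrable)
  have hsub : f x - (∫ t in x..x + h, f t) / h = (∫ t in x..x + h, (f x - f t)) / h := by
    rw [intervalIntegral.integral_sub intervalIntegrable_const (hcont.intervalIntegrable _ _),
      intervalIntegral.integral_const, smul_eq_mul, add_sub_cancel_left]
    field_simp
  rw [hsub, abs_div, abs_of_pos hh, div_le_iff₀ hh]
  simpa [abs_of_pos hh] using intervalIntegral.norm_integral_le_of_norm_le_const hosc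

theorem abs_sum_sub_intervalIntegral_div_le (hf : ∀ t, HasDerivAt f (f' t) t)
    (hf' : Integrable f') (a : ℝ) {h : ℝ} (hh : 0 < h) (m : ℕ) :
    |∑ k ∈ Finset.range m, f (a + k * h) - (∫ t in a..a + m * h, f t) / h| ≤
      ∫ t in a..a + m * h, |f' t| := by
  induction m with
  | zero => simp
  | succ m ih =>
    have hcont : Continuous f := continuous_iff_continuousAt.2 fun t => (hf t).continuousAt
    have hcell := abs_sub_intervalIntegral_div_le hf hf' (a + m * h) hh
    have hend : a + ((m + 1 : ℕ) : ℝ) * h = a + m * h + h := by push_cast; ring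
    rw [Finset.sum_range_succ, hend,
      ← intervalIntegral.integral_add_adjacent_intervals (hcont.intervalIntegrable _ _)
        (hcont.intervalIntegrable _ _),
      ← intervalIntegral.integral_add_adjacent_intervals hf'.abs.intervalIntegrable
        hf'.abs.intervalIntegrable]
    calc _ = |(∑ k ∈ Finset.range m, f (a + k * h) - (∫ t in a..a + m * h, f t) / h) +
          (f (a + m * h) - (∫ t in a + m * h..a + m * h + h, f t) / h)| := by
          rw [add_div]; congr 1; ring
      _ ≤ _ := (abs_add_le _ _).trans (add_le_add ih hcell)

theorem abs_integral_sub_intervalIntegral_le (k : ℕ) (hf : Integrable f)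
    (hfk : Integrable fun t => t ^ k * f t) {a b q : ℝ} (hq : 0 < q) (ha : a ≤ -q)
    (hb : q ≤ b) :
    |(∫ t, f t) - ∫ t in a..b, f t| ≤ (∫ t, |t ^ k * f t|) / q ^ k := by
  have hfar : ∀ t ∈ (Set.Ioc a b)ᶜ, |f t| ≤ |t ^ k * f t| / q ^ k := by
    intro t ht
    have hqt : q ≤ |t| := by
      simp only [Set.mem_compl_iff, Set.mem_Ioc, not_and_or, not_lt, not_le] at ht
      rcases ht with ht | ht
      · exact le_abs.2 (Or.inr (by linarith))
      · exact le_abs.2 (Or.inl (by linarith))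
    rw [le_div_iff₀ (by positivity), abs_mul, abs_pow, mul_comm]
    gcongr
  have hsplit : (∫ t, f t) - ∫ t in a..b, f t = ∫ t in (Set.Ioc a b)ᶜ, f t := by
    rw [intervalIntegral.integral_of_le (by linarith)]
    exact (setIntegral_compl measurableSet_Ioc hf).symm
  rw [hsplit, ← integral_div]
  calc |∫ t in (Set.Ioc a b)ᶜ, f t| ≤ ∫ t in (Set.Ioc a b)ᶜ, |f t| :=
        abs_integral_le_integral_abs
    _ ≤ ∫ t in (Set.Ioc a b)ᶜ, |t ^ k * f t| / q ^ k :=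
      setIntegral_mono_on hf.abs.integrableOn (hfk.abs.div_const _).integrableOn
        measurableSet_Ioc.compl hfar
    _ ≤ ∫ t, |t ^ k * f t| / q ^ k :=
      setIntegral_le_integral (hfk.abs.div_const _) (ae_of_all _ fun t => by positivity)

theorem abs_sum_sub_integral_div_le (k : ℕ) (hf : ∀ t, HasDerivAt f (f' t) t)
    (hfi : Integrable f) (hf' : Integrable f') (hfk : Integrable fun t => t ^ k * f t)
    {a h q : ℝ} {m : ℕ} (hh : 0 < h) (hq : 0 < q) (ha : a ≤ -q) (hb : q ≤ a + m * h) :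
    |∑ j ∈ Finset.range m, f (a + j * h) - (∫ t, f t) / h| ≤
      (∫ t, |f' t|) + (∫ t, |t ^ k * f t|) / (h * q ^ k) := by
  have hderiv : ∫ t in a..a + m * h, |f' t| ≤ ∫ t, |f' t| := by
    rw [intervalIntegral.integral_of_le (by linarith)]
    exact setIntegral_le_integral hf'.abs (ae_of_all _ fun _ => abs_nonneg _)
  have htail := abs_integral_sub_intervalIntegral_le k hfi hfk hq ha hb
  calc _ = |(∑ j ∈ Finset.range m, f (a + j * h) - (∫ t in a..a + m * h, f t) / h) -
        ((∫ t, f t) - ∫ t in a..a + m * h, f t) / h| := by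
        congr 1; rw [sub_div]; ring
    _ ≤ (∫ t, |f' t|) + (∫ t, |t ^ k * f t|) / q ^ k / h := by
        refine (abs_sub _ _).trans (add_le_add
          ((abs_sum_sub_intervalIntegral_div_le hf hf' a hh m).trans hderiv) ?_)
        rw [abs_div, abs_of_pos hh]
        exact div_le_div_of_nonneg_right htail hh.le
    _ = _ := by rw [div_div, mul_comm]

end RiemannSum

theorem exists_sum_filter_parity_eq_sum_range {M : Type*} [AddCommMonoid M] (n : ℕ)
    (g : ℤ → M) :
    ∃ ℓ₀ : ℤ, ∃ m : ℕ, 4 * ℓ₀ ≤ 8 - 2 * n ∧ 2 * n ≤ 4 * (ℓ₀ + 2 * m) ∧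
      ∑ ℓ ∈ (Finset.Ioo (-(n : ℤ)) n).filter (fun ℓ : ℤ => 2 * |ℓ| < n ∧ ℓ % 2 = n % 2), g ℓ =
        ∑ k ∈ Finset.range m, g (ℓ₀ + 2 * k) := by
  refine ⟨2 * ((n : ℤ) / 4 + 1) - n, ((3 * (n : ℤ) - 1) / 4 - n / 4).toNat, by omega,
    by omega,
    Finset.sum_nbij' (fun ℓ => ((ℓ - (2 * ((n : ℤ) / 4 + 1) - n)) / 2).toNat)
      (fun k => 2 * ((n : ℤ) / 4 + 1) - n + 2 * k) ?_ ?_ ?_ ?_ ?_⟩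
  · intro ℓ hℓ
    simp only [Finset.mem_filter, Finset.mem_Ioo, Finset.mem_range] at hℓ ⊢
    have := le_abs_self ℓ; have := neg_abs_le ℓ
    omega
  · intro k hk
    simp only [Finset.mem_filter, Finset.mem_Ioo, Finset.mem_range] at hk ⊢
    have := abs_cases (2 * ((n : ℤ) / 4 + 1) - n + 2 * k)
    omega
  · intro ℓ hℓ
    simp only [Finset.mem_filter, Finset.mem_Ioo] at hℓ
    have := le_abs_self ℓ; have := neg_abs_le ℓ
    omega
  · intro k hk
    omega
  · intro ℓ hℓ
    simp only [Finset.mem_filter, Finset.mem_Ioo] at hℓ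
    have := le_abs_self ℓ; have := neg_abs_le ℓ
    congr 1
    omega

noncomputable def p2' (t : ℝ) : ℝ :=
  (t - 11 * t ^ 5 / 30 + t ^ 9 / 90) * Real.exp (-t ^ 4 / 12)

theorem hasDerivAt_p2 (t : ℝ) : HasDerivAt p2 (p2' t) t := by
  have hpoly : HasDerivAt (fun x : ℝ => x ^ 2 / 2 - x ^ 6 / 30) (t - t ^ 5 / 5) t :=
    (((hasDerivAt_pow 2 t).div_const 2).sub ((hasDerivAt_pow 6 t).div_const 30)).congr_deriv
      (by norm_num; ring)
  have hquartic : HasDerivAt (fun x : ℝ => -x ^ 4 / 12) (-t ^ 3 / 3) t :=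
    ((hasDerivAt_pow 4 t).neg.div_const 12).congr_deriv (by norm_num; ring)
  exact (hpoly.mul hquartic.exp).congr_deriv (by rw [p2']; ring)

theorem integrable_p2 : Integrable p2 := by
  have h k := integrable_pow_mul_exp_neg_pow_four_div k (c := 12) (by norm_num)
  refine (((h 2).div_const 2).sub ((h 6).div_const 30)).congr (ae_of_all _ fun t => ?_)
  simp only [p2, Pi.sub_apply]; ring

theorem integrable_p2' : Integrable p2' := by
  have h k := integrable_pow_mul_exp_neg_pow_four_div k (c := 12) (by norm_num)
  refine (((h 1).sub ((h 5).const_mul (11 / 30))).add ((h 9).div_const 90)).congr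
    (ae_of_all _ fun t => ?_)
  simp only [p2', Pi.sub_apply, Pi.add_apply]; ring

theorem integrable_pow_three_mul_p2 : Integrable fun t => t ^ 3 * p2 t := by
  have h k := integrable_pow_mul_exp_neg_pow_four_div k (c := 12) (by norm_num)
  refine (((h 5).div_const 2).sub ((h 9).div_const 30)).congr (ae_of_all _ fun t => ?_)
  simp only [p2, Pi.sub_apply]; ring

theorem riemann_sum_p2 :
    ∃ C : ℝ, 0 < C ∧ ∃ N : ℕ, ∀ n : ℕ, N ≤ n →
      |(∑ ℓ ∈ (Finset.Ioo (-(n : ℤ)) (n : ℤ)).filter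
            (fun ℓ : ℤ => 2 * |ℓ| < (n : ℤ) ∧ ℓ % 2 = (n : ℤ) % 2),
          p2 ((ℓ : ℝ) / (n : ℝ) ^ ((3 : ℝ) / 4))) -
        ((n : ℝ) ^ ((3 : ℝ) / 4) / 2) * ∫ t : ℝ, p2 t| ≤ C * (n : ℝ) ^ ((1 : ℝ) / 12) := by
  set D := ∫ t, |p2' t|
  set M := ∫ t, |t ^ 3 * p2 t|
  refine ⟨D + 32 * M + 1, by positivity, 8, fun n hn => ?_⟩
  have hn0 : (0 : ℝ) < n := by norm_cast; omega
  set α := (n : ℝ) ^ ((3 : ℝ) / 4)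
  have hα : 0 < α := by positivity
  have hα4 : α ^ 4 = n ^ 3 := by
    rw [← Real.rpow_natCast, ← Real.rpow_mul hn0.le]; norm_num
  obtain ⟨ℓ₀, m, hlo, hhi, hsum⟩ :=
    exists_sum_filter_parity_eq_sum_range n (fun ℓ => p2 (ℓ / α))
  have hlo' : (4 * ℓ₀ : ℝ) ≤ -n := by exact_mod_cast (by omega : 4 * ℓ₀ ≤ -(n : ℤ))
  have hhi' : (n : ℝ) ≤ 4 * (ℓ₀ + 2 * m) := by
    exact_mod_cast (by omega : (n : ℤ) ≤ 4 * (ℓ₀ + 2 * m))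
  have hbound := abs_sum_sub_integral_div_le 3 hasDerivAt_p2 integrable_p2 integrable_p2'
    integrable_pow_three_mul_p2 (a := ℓ₀ / α) (h := 2 / α) (q := n / (4 * α)) (m := m)
    (by positivity) (by positivity)
    (by rw [show -(n / (4 * α)) = (-n / 4) / α by ring]; gcongr; linarith)
    (by rw [show ℓ₀ / α + m * (2 / α) = (ℓ₀ + 2 * m) / α by ring,
      show n / (4 * α) = (n / 4) / α by ring]; gcongr; linarith)
  have hn12 : 1 ≤ (n : ℝ) ^ ((1 : ℝ) / 12) :=
    Real.one_le_rpow (by exact_mod_cast (by omega : 1 ≤ n)) (by norm_num)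
  calc _ = |∑ k ∈ Finset.range m, p2 (ℓ₀ / α + k * (2 / α)) - (∫ t, p2 t) / (2 / α)| := by
        rw [hsum]; push_cast; congr 2
        · exact Finset.sum_congr rfl fun k _ => by ring_nf
        · field_simp
    _ ≤ D + M / (2 / α * (n / (4 * α)) ^ 3) := hbound
    _ = D + 32 * M := by field_simp; rw [hα4]; ring
    _ ≤ (D + 32 * M + 1) * (n : ℝ) ^ ((1 : ℝ) / 12) := by
        nlinarith [show 0 ≤ D by positivity, show 0 ≤ M by positivity]
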